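/- Set Q := e₀² − e₀ − e₁e₋₁, Z := (1/2)(e₁e₀ − e₂e₋₁ − e₁), and Y := Q(e₀ − 1/2) − Ze₋₁ in U(Vec ℝ). For every λ ∈ ℂ, Y acts on ℱ_λ by the scalar y(λ) := (λ − 1/2)(λ² − λ); that is, π_λ(Y) = (λ − 1/2)(λ² − λ)·id on ℂ[x]. -/

import Mathlib

open Polynomial

attribute [local instance 100] LieRing.ofAssociativeRing

noncomputable section

abbrev VecR : Type := Derivation ℂ (Polynomial ℂ) (Polynomial ℂ)

def eVF (n : ℤ) : VecR := Polynomial.mkDerivation ℂ (X ^ (n + 1).toNat)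

lemma vecR_apply (D : VecR) (f : Polynomial ℂ) :
    D f = derivative f * D X := by
  have h : D = Polynomial.mkDerivation ℂ (D X) :=
    Polynomial.derivation_ext (by rw [Polynomial.mkDerivation_X])
  conv_lhs => rw [h]
  rw [Polynomial.mkDerivation_apply]
  simp [smul_eq_mul, mul_comm]

def piL (lam : ℂ) : VecR →ₗ⁅ℂ⁆ Module.End ℂ (Polynomial ℂ) where
  toFun D := D.toLinearMap + lam • (LinearMap.mulLeft ℂ (derivative (D X)))
  map_add' D1 D2 := by
    refine LinearMap.ext fun g => ?_
    simp only [LinearMap.add_apply, LinearMap.smul_apply, LinearMap.mulLeft_apply,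
      Derivation.coeFn_coe, Derivation.add_apply, map_add, smul_eq_C_mul]
    ring
  map_smul' c D := by
    refine LinearMap.ext fun g => ?_
    simp only [RingHom.id_apply, LinearMap.add_apply, LinearMap.smul_apply,
      LinearMap.mulLeft_apply, Derivation.coeFn_coe, Derivation.smul_apply,
      map_smul, smul_eq_C_mul, derivative_C_mul]
    ring
  map_lie' {D1 D2} := by
    refine LinearMap.ext fun g => ?_
    simp only [LieHom.lie_apply, Ring.lie_def, Module.End.mul_apply,
      LinearMap.add_apply, LinearMap.sub_apply, LinearMap.smul_apply,
      Derivation.coeFn_coe, LinearMap.mulLeft_apply,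
      Derivation.commutator_apply, Derivation.map_add, Derivation.map_smul]
    rw [vecR_apply D1 (D2 g), vecR_apply D2 (D1 g),
      vecR_apply D1 (derivative (D2 X) * g), vecR_apply D2 (derivative (D1 X) * g),
      vecR_apply D1 (D2 X), vecR_apply D2 (D1 X),
      vecR_apply D1 g, vecR_apply D2 g]
    simp only [derivative_sub, derivative_add, derivative_neg, derivative_mul, smul_eq_C_mul]
    ring

end
noncomputable section

/-- The universal enveloping algebra of `Vec ℝ`. -/
abbrev UVec : Type := UniversalEnvelopingAlgebra ℂ VecR

/-- The image of `e n` in the universal enveloping algebra. -/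
def eU (n : ℤ) : UVec := UniversalEnvelopingAlgebra.ι ℂ (eVF n)

/-- The extension of `π_λ` to an algebra homomorphism on `U(Vec ℝ)`. -/
def piU (lam : ℂ) : UVec →ₐ[ℂ] Module.End ℂ (Polynomial ℂ) :=
  UniversalEnvelopingAlgebra.lift ℂ (piL lam)

/-- The annihilator of the tensor density module `ℱ_λ`. -/
def AnnF (lam : ℂ) : Submodule ℂ UVec := LinearMap.ker (piU lam).toLinearMap

end
noncomputable section

/-- `Q = e₀² − e₀ − e₁e₋₁`, the Casimir element of the projective subalgebra. -/
def Qel : UVec := eU 0 ^ 2 - eU 0 - eU 1 * eU (-1)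

/-- `Z = (1/2)(e₁e₀ − e₂e₋₁ − e₁)`. -/
def Zel : UVec := (1 / 2 : ℂ) • (eU 1 * eU 0 - eU 2 * eU (-1) - eU 1)

/-- `Y = Q(e₀ − 1/2) − Ze₋₁`. -/
def Yel : UVec := Qel * (eU 0 - (1 / 2 : ℂ) • 1) - Zel * eU (-1)

/-- `Q^{e₂} = 3e₁² − 2e₂(2e₀ + 1) + e₃e₋₁`. -/
def Qe2 : UVec := 3 * eU 1 ^ 2 - 2 * eU 2 * (2 * eU 0 + 1) + eU 3 * eU (-1)

end

/-
`Q` is the Casimir element of `𝔰𝔩₂ = ⟨e₋₁, e₀, e₁⟩` and acts on `ℱ_λ` by `λ² − λ`, while `Z`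
acts as multiplication by `(λ² − λ) x`. Since `π_λ(e₀) = x∂ + λ` and `π_λ(e₋₁) = ∂`, this gives
`π_λ(Y) = (λ² − λ)(x∂ + λ − 1/2) − (λ² − λ) x∂ = (λ − 1/2)(λ² − λ)`.
-/

lemma piU_eU_apply (lam : ℂ) (n : ℤ) (g : Polynomial ℂ) :
    piU lam (eU n) g =
      X ^ (n + 1).toNat * derivative g + C lam * derivative (X ^ (n + 1).toNat) * g := by
  rw [piU, eU, UniversalEnvelopingAlgebra.lift_ι_apply]
  show ((eVF n).toLinearMap + lam • LinearMap.mulLeft ℂ (derivative (eVF n X))) g = _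
  rw [LinearMap.add_apply, LinearMap.smul_apply, LinearMap.mulLeft_apply, Derivation.coeFn_coe,
    vecR_apply, eVF, mkDerivation_X, smul_eq_C_mul]
  ring

lemma piU_eU_neg_one_apply (lam : ℂ) (g : Polynomial ℂ) :
    piU lam (eU (-1)) g = derivative g := by
  simp [piU_eU_apply]

lemma piU_eU_natCast_apply (lam : ℂ) (n : ℕ) (g : Polynomial ℂ) :
    piU lam (eU n) g =
      X ^ (n + 1) * derivative g + ((n : Polynomial ℂ) + 1) * C lam * X ^ n * g := by
  rw [piU_eU_apply, show ((n : ℤ) + 1).toNat = n + 1 by omega, derivative_X_pow, map_natCast]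
  push_cast
  ring

lemma piU_eU_zero_apply (lam : ℂ) (g : Polynomial ℂ) :
    piU lam (eU 0) g = X * derivative g + C lam * g := by
  simpa using piU_eU_natCast_apply lam 0 g

lemma piU_eU_one_apply (lam : ℂ) (g : Polynomial ℂ) :
    piU lam (eU 1) g = X ^ 2 * derivative g + 2 * C lam * X * g := by
  simpa [one_add_one_eq_two] using piU_eU_natCast_apply lam 1 g

lemma piU_eU_two_apply (lam : ℂ) (g : Polynomial ℂ) :
    piU lam (eU 2) g = X ^ 3 * derivative g + 3 * C lam * X ^ 2 * g := by
  have h := piU_eU_natCast_apply lam 2 g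
  norm_num at h
  exact h

lemma piU_Qel (lam : ℂ) :
    piU lam Qel = (lam ^ 2 - lam) • (1 : Module.End ℂ (Polynomial ℂ)) := by
  refine LinearMap.ext fun g => ?_
  simp only [Qel, map_sub, map_mul, pow_two, LinearMap.sub_apply, Module.End.mul_apply,
    LinearMap.smul_apply, Module.End.one_apply, piU_eU_neg_one_apply, piU_eU_zero_apply,
    piU_eU_one_apply, smul_eq_C_mul]
  simp only [derivative_mul, derivative_add, derivative_X, derivative_C]
  ring

lemma piU_Zel (lam : ℂ) :
    piU lam Zel = (lam ^ 2 - lam) • LinearMap.mulLeft ℂ (X : Polynomial ℂ) := by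
  refine LinearMap.ext fun g => ?_
  simp only [Zel, map_sub, map_mul, map_smul, LinearMap.sub_apply, Module.End.mul_apply,
    LinearMap.smul_apply, LinearMap.mulLeft_apply, piU_eU_neg_one_apply, piU_eU_zero_apply,
    piU_eU_one_apply, piU_eU_two_apply, smul_eq_C_mul]
  simp only [derivative_mul, derivative_add, derivative_X, derivative_C, map_pow]
  have h2 : C (1 / 2 : ℂ) * 2 = 1 := by rw [← map_ofNat C, ← map_mul]; norm_num
  linear_combination (C lam ^ 2 - C lam) * X * g * h2

/-- For every `λ ∈ ℂ`, `Y` acts on `ℱ_λ` by the scalar `y(λ) = (λ − 1/2)(λ² − λ)`. -/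
theorem piU_Yel (lam : ℂ) :
    piU lam Yel = ((lam - 1 / 2) * (lam ^ 2 - lam)) • (1 : Module.End ℂ (Polynomial ℂ)) := by
  refine LinearMap.ext fun g => ?_
  simp only [Yel, map_sub, map_mul, map_smul, map_one, piU_Qel, piU_Zel, LinearMap.sub_apply,
    LinearMap.smul_apply, Module.End.mul_apply, Module.End.one_apply, LinearMap.mulLeft_apply,
    piU_eU_neg_one_apply, piU_eU_zero_apply, smul_eq_C_mul, map_pow]
  ring
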